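/- arXiv:2209.14575 — 2 statements merged into one kernel-verified Lean document; each statement's English description precedes it below -/
import Mathlib

section
/- Let L : ℝ^m × ℝ^n → ℝ be C², α : ℝ, and define the iterates y^{k'+1}(w) = y^{k'}(w) + α • ∇_y L(w, y^{k'}(w)) starting from a C¹ initialization y⁰(w) = f(w). Then for every K, the map w ↦ L(w, y^K(w)) is differentiable, and its total derivative satisfies d/dw [L(w, y^K(w))] = ∇_w L(w, y^K(w)) + Σ_{k'=0}^{K} (∂y^{k'}/∂w)ᵀ · v^{k'}, where v^K = ∇_y L(w, y^K(w)), v^{k'} = (I + α ∇²_{yy} L(w, y^{k'}))ᵀ v^{k'+1} for k' < K, ∂y^{k'+1}/∂w = α ∇²_{wy} L(w, y^{k'}) (the partial derivative with y^{k'} held fixed), and ∂y⁰/∂w = Df(w). -/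
/-!
Differentiating one gradient-ascent step `y ↦ y + α • ∇_y L (w, y)` by the chain rule gives the
forward (tangent) recursion `Dy^{k+1} = ∂y^{k+1}/∂w + (I + α ∇²_{yy} L) Dy^k`. Transposing it,
`(Dy^{k+1})ᵀ v^{k+1} = (∂y^{k+1}/∂w)ᵀ v^{k+1} + (Dy^k)ᵀ v^k` exactly when `v^k` obeys the
backward recursion, so `(Dy^K)ᵀ ∇_y L` telescopes into the sum of the theorem, and the chain rule
for `w ↦ L (w, y^K w)` adds the direct term `∇_w L`.
-/

open scoped RealInnerProductSpace
open ContinuousLinearMap (inl inr adjoint comp_apply adjoint_inner_left)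
open InnerProductSpace (toDual)

section Chain

variable {𝕜 E F G : Type*} [NontriviallyNormedField 𝕜] [NormedAddCommGroup E] [NormedSpace 𝕜 E]
  [NormedAddCommGroup F] [NormedSpace 𝕜 F] [NormedAddCommGroup G] [NormedSpace 𝕜 G]
  {φ : E × F → G} {x : E}

lemma DifferentiableAt.hasFDerivAt_partial_fst {y : F} (h : DifferentiableAt 𝕜 φ (x, y)) :
    HasFDerivAt (fun x' => φ (x', y)) (fderiv 𝕜 φ (x, y) ∘L inl 𝕜 E F) x :=
  h.hasFDerivAt.comp x (hasFDerivAt_prodMk_left x y)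

lemma DifferentiableAt.hasFDerivAt_partial_snd {y : F} (h : DifferentiableAt 𝕜 φ (x, y)) :
    HasFDerivAt (fun y' => φ (x, y')) (fderiv 𝕜 φ (x, y) ∘L inr 𝕜 E F) y :=
  h.hasFDerivAt.comp y (hasFDerivAt_prodMk_right x y)

lemma DifferentiableAt.hasFDerivAt_comp_prodMk {y : E → F} {y' : E →L[𝕜] F}
    (hφ : DifferentiableAt 𝕜 φ (x, y x)) (hy : HasFDerivAt y y' x) :
    HasFDerivAt (fun x' => φ (x', y x'))
      (fderiv 𝕜 (fun x' => φ (x', y x)) x + fderiv 𝕜 (fun y₀ => φ (x, y₀)) (y x) ∘L y') x := by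
  rw [hφ.hasFDerivAt_partial_fst.fderiv, hφ.hasFDerivAt_partial_snd.fderiv]
  refine (hφ.hasFDerivAt.comp x ((hasFDerivAt_id x).prodMk hy)).congr_fderiv ?_
  ext v
  simp [← map_add]

lemma DifferentiableAt.hasFDerivAt_add_smul_comp_prodMk {g : E × F → F} {y : E → F}
    {y' : E →L[𝕜] F} (α : 𝕜) (hg : DifferentiableAt 𝕜 g (x, y x)) (hy : HasFDerivAt y y' x) :
    HasFDerivAt (fun x' => y x' + α • g (x', y x'))
      (α • fderiv 𝕜 (fun x' => g (x', y x)) x +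
        (ContinuousLinearMap.id 𝕜 F + α • fderiv 𝕜 (fun y₀ => g (x, y₀)) (y x)) ∘L y') x := by
  refine (hy.add ((hg.hasFDerivAt_comp_prodMk hy).const_smul α)).congr_fderiv ?_
  simp only [ContinuousLinearMap.add_comp, ContinuousLinearMap.id_comp,
    ContinuousLinearMap.smul_comp, smul_add]
  abel

end Chain

section Gradient

variable {E F : Type*} [NormedAddCommGroup E] [InnerProductSpace ℝ E]
  [NormedAddCommGroup F] [InnerProductSpace ℝ F] [CompleteSpace F] {φ : E × F → ℝ}

lemma ContDiff.gradient_partial_snd {n : WithTop ℕ∞} (hφ : ContDiff ℝ (n + 1) φ) :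
    ContDiff ℝ n fun p : E × F => gradient (fun y => φ (p.1, y)) p.2 := by
  have hφd : Differentiable ℝ φ := hφ.differentiable (by simp)
  have hpartial : (fun p : E × F => gradient (fun y => φ (p.1, y)) p.2) =
      fun p => (toDual ℝ F).symm (fderiv ℝ φ p ∘L inr ℝ E F) :=
    funext fun p => (hasFDerivAt_iff_hasGradientAt.mp (hφd p).hasFDerivAt_partial_snd).gradient
  rw [hpartial]
  exact (toDual ℝ F).symm.contDiff.comp
    (((ContinuousLinearMap.compL ℝ F (E × F) ℝ).flip (inr ℝ E F)).contDiff.comp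
      (hφ.fderiv_right le_rfl))

lemma DifferentiableAt.hasGradientAt_comp_prodMk [CompleteSpace E] {x : E} {y : E → F}
    {y' : E →L[ℝ] F} (hφ : DifferentiableAt ℝ φ (x, y x)) (hy : HasFDerivAt y y' x) :
    HasGradientAt (fun x' => φ (x', y x'))
      (gradient (fun x' => φ (x', y x)) x +
        adjoint y' (gradient (fun y₀ => φ (x, y₀)) (y x))) x := by
  rw [hasGradientAt_iff_hasFDerivAt]
  refine (hφ.hasFDerivAt_comp_prodMk hy).congr_fderiv ?_
  ext v
  rw [add_apply, comp_apply, map_add, add_apply, toDual_gradient,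
    ← toDual_gradient (f := fun y₀ => φ (x, y₀)), InnerProductSpace.toDual_apply_apply,
    InnerProductSpace.toDual_apply_apply, adjoint_inner_left]

end Gradient

theorem ContinuousLinearMap.adjoint_apply_eq_sum_of_recurrence {𝕜 E F : Type*} [RCLike 𝕜]
    [NormedAddCommGroup E] [InnerProductSpace 𝕜 E] [CompleteSpace E]
    [NormedAddCommGroup F] [InnerProductSpace 𝕜 F] [CompleteSpace F]
    {D J : ℕ → E →L[𝕜] F} {A : ℕ → F →L[𝕜] F} {v : ℕ → F}
    (hD0 : D 0 = J 0) (hD : ∀ k, D (k + 1) = J (k + 1) + A k ∘L D k) :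
    ∀ K, (∀ k < K, v k = adjoint (A k) (v (k + 1))) →
      adjoint (D K) (v K) = ∑ k ∈ Finset.range (K + 1), adjoint (J k) (v k)
  | 0, _ => by simp [hD0]
  | K + 1, hv => by
    rw [hD K, map_add, adjoint_comp, Finset.sum_range_succ,
      ← adjoint_apply_eq_sum_of_recurrence hD0 hD K fun k hk => hv k (hk.trans K.lt_succ_self),
      hv K K.lt_succ_self]
    simp only [add_apply, comp_apply]
    abel

/-- Back-propagation through gradient ascent (Theorem 1): the total derivative of
`w ↦ L (w, y^K (w))`, where `y^{k+1} (w) = y^k (w) + α • ∇_y L (w, y^k (w))` and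
`y⁰ (w) = f w`, equals `∇_w L (w, y^K (w)) + Σ_{k=0}^{K} (∂y^k/∂w)ᵀ v^k` with the
backward-recursion vectors `v^k`. -/
theorem stmt2 {m n : ℕ}
    (L : EuclideanSpace ℝ (Fin m) × EuclideanSpace ℝ (Fin n) → ℝ)
    (hL : ContDiff ℝ 2 L) (α : ℝ)
    (f : EuclideanSpace ℝ (Fin m) → EuclideanSpace ℝ (Fin n))
    (hf : ContDiff ℝ 1 f)
    (Y : ℕ → EuclideanSpace ℝ (Fin m) → EuclideanSpace ℝ (Fin n))
    (hY0 : ∀ w, Y 0 w = f w)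
    (hYs : ∀ k w, Y (k + 1) w = Y k w + α • gradient (fun y => L (w, y)) (Y k w))
    (K : ℕ) (w : EuclideanSpace ℝ (Fin m))
    -- backward vectors v^k
    (v : ℕ → EuclideanSpace ℝ (Fin n))
    (hvK : v K = gradient (fun y => L (w, y)) (Y K w))
    (hv : ∀ k < K, v k =
      (ContinuousLinearMap.adjoint
        (ContinuousLinearMap.id ℝ (EuclideanSpace ℝ (Fin n))
          + α • fderiv ℝ (fun y => gradient (fun y' => L (w, y')) y) (Y k w)))
        (v (k + 1)))
    -- partial Jacobians ∂y^k/∂w (with y^{k-1} held fixed)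
    (J : ℕ → EuclideanSpace ℝ (Fin m) →L[ℝ] EuclideanSpace ℝ (Fin n))
    (hJ0 : J 0 = fderiv ℝ f w)
    (hJ : ∀ k, J (k + 1) =
      α • fderiv ℝ (fun w' => gradient (fun y => L (w', y)) (Y k w)) w) :
    DifferentiableAt ℝ (fun w' => L (w', Y K w')) w ∧
    HasGradientAt (fun w' => L (w', Y K w'))
      (gradient (fun w' => L (w', Y K w)) w
        + ∑ k ∈ Finset.range (K + 1), (ContinuousLinearMap.adjoint (J k)) (v k)) w := by
  have hLd : Differentiable ℝ L := hL.differentiable two_ne_zero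
  have hg : Differentiable ℝ fun p : _ × _ => gradient (fun y => L (p.1, y)) p.2 :=
    (hL.gradient_partial_snd (n := 1)).differentiable one_ne_zero
  have hY : ∀ k, Differentiable ℝ (Y k) := by
    intro k
    induction k with
    | zero => rw [funext hY0]; exact hf.differentiable one_ne_zero
    | succ k ih =>
      rw [funext (hYs k)]
      exact ih.add ((hg.comp (differentiable_id.prodMk ih)).const_smul α)
  have hD0 : fderiv ℝ (Y 0) w = J 0 := by rw [funext hY0, hJ0]
  have hD : ∀ k, fderiv ℝ (Y (k + 1)) w = J (k + 1) +
      (ContinuousLinearMap.id ℝ _ + α • fderiv ℝ (fun y => gradient (fun y' => L (w, y')) y)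
        (Y k w)) ∘L fderiv ℝ (Y k) w := by
    intro k
    rw [hJ k, funext (hYs k)]
    exact ((hg _).hasFDerivAt_add_smul_comp_prodMk α (hY k w).hasFDerivAt).fderiv
  have hgrad := (hLd _).hasGradientAt_comp_prodMk (hY K w).hasFDerivAt
  rw [← hvK, ContinuousLinearMap.adjoint_apply_eq_sum_of_recurrence
    (D := fun k => fderiv ℝ (Y k) w) hD0 hD K hv] at hgrad
  exact ⟨hgrad.differentiableAt, hgrad⟩
end

section
/- Let L : ℝ^m × ℝ^n → ℝ be C², define the K-step inner solve y^K(w) by y^{k+1} = y^k + α ∇_y L(w, y^k) with y⁰ = f(w) for C¹ f, and let v^{k'} be defined backwards by v^K = ∇_y L(w, y^K), v^{k'} = v^{k'+1} + α ∇²_{yy} L(w, y^{k'}) v^{k'+1}. Then the reverse accumulation ŵ := ∇_w L(w, y^K) + α Σ_{k'=0}^{K-1} ∇²_{wy} L(w, y^{k'})ᵀ-applied-to v^{k'+1} + Df(w)ᵀ v⁰ equals the total derivative d/dw L(w, y^K(w)). -/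
/-!
Write `D k` for the Jacobian of `w ↦ y^k(w)`. Differentiating the inner iteration gives the
forward recursion `D (k+1) = D k + α (∂_w ∇_y L + ∇²_yy L ∘ D k)`, and the chain rule gives
`∇ (L (w, y^K w)) = ∇_w L + (D K)ᵀ ∇_y L`. Since the Hessian `∇²_yy L` is self-adjoint, the
backward recursion for `v` is exactly the adjoint of the forward one, so `(D k)ᵀ v k` telescopes:
`(D (k+1))ᵀ v (k+1) - (D k)ᵀ v k = α (∂_w ∇_y L)ᵀ v (k+1)`. Summing from `0` to `K` and using
`D 0 = Df` yields the reverse accumulation `ŵ`.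
-/

open InnerProductSpace ContinuousLinearMap

section ChainRule

variable {𝕜 E F H : Type*} [NontriviallyNormedField 𝕜] [NormedAddCommGroup E] [NormedSpace 𝕜 E]
  [NormedAddCommGroup F] [NormedSpace 𝕜 F] [NormedAddCommGroup H] [NormedSpace 𝕜 H]

theorem DifferentiableAt.hasFDerivAt_comp_graph {G : E × F → H} {y : E → F} {D : E →L[𝕜] F}
    {x : E} (hG : DifferentiableAt 𝕜 G (x, y x)) (hy : HasFDerivAt y D x) :
    HasFDerivAt (fun x' => G (x', y x'))
      (fderiv 𝕜 (fun x' => G (x', y x)) x + fderiv 𝕜 (fun y' => G (x, y')) (y x) ∘L D) x := by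
  have hx : HasFDerivAt (fun x' => G (x', y x)) _ x :=
    hG.hasFDerivAt.comp x (hasFDerivAt_prodMk_left (𝕜 := 𝕜) x (y x))
  have hy' : HasFDerivAt (fun y' => G (x, y')) _ (y x) :=
    hG.hasFDerivAt.comp (y x) (hasFDerivAt_prodMk_right x (y x))
  have hsplit : fderiv 𝕜 G (x, y x) ∘L (ContinuousLinearMap.id 𝕜 E).prod D
      = fderiv 𝕜 (fun x' => G (x', y x)) x + fderiv 𝕜 (fun y' => G (x, y')) (y x) ∘L D := by
    ext u
    simp [hx.fderiv, hy'.fderiv, ← map_add]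
  exact hsplit ▸ hG.hasFDerivAt.comp x ((hasFDerivAt_id x).prodMk hy)

variable {G : E × F → F} {Y : ℕ → E → F} {α : 𝕜}

theorem differentiable_iterate (hG : Differentiable 𝕜 G) (hY0 : Differentiable 𝕜 (Y 0))
    (hY : ∀ k x, Y (k + 1) x = Y k x + α • G (x, Y k x)) (k : ℕ) : Differentiable 𝕜 (Y k) := by
  induction k with
  | zero => exact hY0
  | succ k ih =>
    rw [funext (hY k)]
    exact ih.add ((hG.comp (differentiable_id.prodMk ih)).const_smul α)

theorem fderiv_iterate_succ {k : ℕ} (hG : Differentiable 𝕜 G) (hYk : Differentiable 𝕜 (Y k))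
    (hY : ∀ x, Y (k + 1) x = Y k x + α • G (x, Y k x)) (x : E) :
    fderiv 𝕜 (Y (k + 1)) x = fderiv 𝕜 (Y k) x + α • (fderiv 𝕜 (fun x' => G (x', Y k x)) x
      + fderiv 𝕜 (fun y => G (x, y)) (Y k x) ∘L fderiv 𝕜 (Y k) x) := by
  rw [funext hY]
  exact ((hYk x).hasFDerivAt.add
    (((hG _).hasFDerivAt_comp_graph (hYk x).hasFDerivAt).const_smul α)).fderiv

end ChainRule

section PartialGradient

variable {E F : Type*} [NormedAddCommGroup E] [NormedSpace ℝ E]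
  [NormedAddCommGroup F] [InnerProductSpace ℝ F] [CompleteSpace F]

theorem isSelfAdjoint_fderiv_gradient {h : F → ℝ} {y : F} (hh : ContDiffAt ℝ 2 h y) :
    IsSelfAdjoint (fderiv ℝ (gradient h) y) := by
  have hH : DifferentiableAt ℝ (fderiv ℝ h) y :=
    (hh.fderiv_right (m := 1) le_rfl).differentiableAt one_ne_zero
  have hinner : ∀ u u', ⟪fderiv ℝ (gradient h) y u, u'⟫_ℝ = fderiv ℝ (fderiv ℝ h) y u u' := by
    intro u u'
    have hφ : (fun z => ⟪gradient h z, u'⟫_ℝ) = fun z => fderiv ℝ h z u' :=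
      funext fun z => inner_gradient_left
    have hg : DifferentiableAt ℝ (gradient h) y := (toDual ℝ F).symm.differentiableAt.comp y hH
    have h1 := hg.hasFDerivAt.inner ℝ (hasFDerivAt_const u' y)
    rw [hφ] at h1
    simpa using congrArg (· u) (h1.unique (hH.hasFDerivAt.clm_apply (hasFDerivAt_const u' y)))
  have hsymm : IsSymmSndFDerivAt ℝ h y :=
    hh.isSymmSndFDerivAt (by simp [minSmoothness_of_isRCLikeNormedField])
  rw [isSelfAdjoint_iff']
  refine ext fun u => ext_inner_right ℝ fun u' => ?_
  rw [adjoint_inner_left, real_inner_comm, hinner, hinner, hsymm]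

noncomputable def gradientSnd (L : E × F → ℝ) (p : E × F) : F :=
  gradient (fun y => L (p.1, y)) p.2

theorem gradientSnd_eq {L : E × F → ℝ} (hL : Differentiable ℝ L) :
    gradientSnd L = fun p => (toDual ℝ F).symm (fderiv ℝ L p ∘L inr ℝ E F) := by
  funext p
  have hp : HasFDerivAt (fun y => L (p.1, y)) _ p.2 :=
    (hL p).hasFDerivAt.comp p.2 (hasFDerivAt_prodMk_right p.1 p.2)
  rw [gradientSnd, gradient, hp.fderiv]

theorem ContDiff.gradientSnd {L : E × F → ℝ} (hL : ContDiff ℝ 2 L) :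
    ContDiff ℝ 1 (gradientSnd L) := by
  rw [gradientSnd_eq (hL.differentiable two_ne_zero)]
  exact (toDual ℝ F).symm.contDiff.comp
    ((hL.fderiv_right one_add_one_eq_two.le).clm_comp contDiff_const)

end PartialGradient

section Adjoint

variable {E F : Type*} [NormedAddCommGroup E] [InnerProductSpace ℝ E] [CompleteSpace E]
  [NormedAddCommGroup F] [InnerProductSpace ℝ F] [CompleteSpace F]

theorem toDual_symm_comp (T : E →L[ℝ] F) (φ : StrongDual ℝ F) :
    (toDual ℝ E).symm (φ ∘L T) = adjoint T ((toDual ℝ F).symm φ) :=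
  ext_inner_right ℝ fun u => by rw [toDual_symm_apply, adjoint_inner_left, toDual_symm_apply]; rfl

theorem DifferentiableAt.hasGradientAt_comp_graph {L : E × F → ℝ} {y : E → F} {D : E →L[ℝ] F}
    {x : E} (hL : DifferentiableAt ℝ L (x, y x)) (hy : HasFDerivAt y D x) :
    HasGradientAt (fun x' => L (x', y x'))
      (gradient (fun x' => L (x', y x)) x
        + adjoint D (gradient (fun y' => L (x, y')) (y x))) x := by
  rw [hasGradientAt_iff_hasFDerivAt, gradient, gradient, ← toDual_symm_comp, ← map_add,
    LinearIsometryEquiv.apply_symm_apply]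
  exact hL.hasFDerivAt_comp_graph hy

theorem adjoint_apply_eq_reverse_accumulation {α : ℝ} {K : ℕ}
    (D A : ℕ → E →L[ℝ] F) (B : ℕ → F →L[ℝ] F) (v : ℕ → F)
    (hD : ∀ k, D (k + 1) = D k + α • (A k + B k ∘L D k))
    (hv : ∀ k < K, v k = v (k + 1) + α • adjoint (B k) (v (k + 1))) :
    adjoint (D K) (v K)
      = adjoint (D 0) (v 0) + α • ∑ k ∈ Finset.range K, adjoint (A k) (v (k + 1)) := by
  have step : ∀ k < K, adjoint (D (k + 1)) (v (k + 1)) - adjoint (D k) (v k)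
      = α • adjoint (A k) (v (k + 1)) := by
    intro k hk
    rw [hD, hv k hk]
    simp only [map_add, map_smul, smul_add, adjoint_comp, add_apply, smul_apply, comp_apply]
    abel
  rw [Finset.smul_sum, ← Finset.sum_congr rfl fun k hk => step k (Finset.mem_range.1 hk),
    Finset.sum_range_sub (fun k => adjoint (D k) (v k))]
  abel

end Adjoint

/-- Correctness of the backward pass of Algorithm 1 (grad-2-level): the reverse
accumulation `ŵ = ∇_w L (w, y^K) + α Σ_{k=0}^{K−1} ∇²_{wy} L (w, y^k)ᵀ v^{k+1}
+ Df (w)ᵀ v⁰`, with `v^K = ∇_y L (w, y^K)` and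
`v^k = v^{k+1} + α ∇²_{yy} L (w, y^k) v^{k+1}`, equals the exact total derivative
of `w ↦ L (w, y^K (w))`. -/
theorem stmt16 {m n : ℕ}
    (L : EuclideanSpace ℝ (Fin m) × EuclideanSpace ℝ (Fin n) → ℝ)
    (hL : ContDiff ℝ 2 L) (α : ℝ)
    (f : EuclideanSpace ℝ (Fin m) → EuclideanSpace ℝ (Fin n))
    (hf : ContDiff ℝ 1 f)
    (Y : ℕ → EuclideanSpace ℝ (Fin m) → EuclideanSpace ℝ (Fin n))
    (hY0 : ∀ w', Y 0 w' = f w')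
    (hYs : ∀ k w', Y (k + 1) w' = Y k w' + α • gradient (fun y => L (w', y)) (Y k w'))
    (K : ℕ) (w : EuclideanSpace ℝ (Fin m))
    (v : ℕ → EuclideanSpace ℝ (Fin n))
    (hvK : v K = gradient (fun y => L (w, y)) (Y K w))
    (hv : ∀ k < K, v k = v (k + 1)
      + α • (fderiv ℝ (fun y => gradient (fun y' => L (w, y')) y) (Y k w)) (v (k + 1)))
    (what : EuclideanSpace ℝ (Fin m))
    (hwhat : what = gradient (fun w' => L (w', Y K w)) w
      + α • ∑ k ∈ Finset.range K,
          (ContinuousLinearMap.adjoint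
            (fderiv ℝ (fun w' => gradient (fun y => L (w', y)) (Y k w)) w)) (v (k + 1))
      + (ContinuousLinearMap.adjoint (fderiv ℝ f w)) (v 0)) :
    HasGradientAt (fun w' => L (w', Y K w')) what w := by
  have hG : Differentiable ℝ (gradientSnd L) := hL.gradientSnd.differentiable one_ne_zero
  have hY : ∀ k, Differentiable ℝ (Y k) :=
    differentiable_iterate hG (funext hY0 ▸ hf.differentiable one_ne_zero) hYs
  have hHessian : ∀ k, IsSelfAdjoint (fderiv ℝ (gradient fun y => L (w, y)) (Y k w)) := fun k =>
    isSelfAdjoint_fderiv_gradient (hL.comp (contDiff_const.prodMk contDiff_id)).contDiffAt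
  have hback := adjoint_apply_eq_reverse_accumulation (K := K) (fun k => fderiv ℝ (Y k) w)
    (fun k => fderiv ℝ (fun w' => gradient (fun y => L (w', y)) (Y k w)) w)
    (fun k => fderiv ℝ (gradient fun y => L (w, y)) (Y k w)) v
    (fun k => fderiv_iterate_succ hG (hY k) (hYs k) w)
    (fun k hk => by rw [(hHessian k).adjoint_eq]; exact hv k hk)
  have htotal := (hL.differentiable two_ne_zero (w, Y K w)).hasGradientAt_comp_graph
    (hY K w).hasFDerivAt
  rw [← hvK, hback, funext hY0] at htotal
  rw [hwhat]
  convert htotal using 1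
  abel
end
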